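/- arXiv:1810.00794 — 2 statements merged into one kernel-verified Lean document; each statement's English description precedes it below -/
import Mathlib

section
/- Let k ≥ 2 and let P_k ⊆ E be the vertex set of the regular 2k-gon inscribed in the unit circle, P_k = {p_j = (cos(jπ/k), sin(jπ/k)) : 0 ≤ j < 2k}. Suppose c : Fin k → E and r : Fin k → ℝ with r i ≤ sin(π/(2k)) for all i and P_k ⊆ ⋃ i, Metric.closedBall (c i) (r i). Then each disk contains exactly two of the vertices, which are adjacent vertices of the 2k-gon, and the resulting pairing of the vertices is one of the two perfect matchings into adjacent pairs: either there is a bijection f of Fin k with P_k ∩ Metric.closedBall (c i) (r i) = {p_{2·f(i)}, p_{2·f(i)+1}} for all i, or there is a bijection f of Fin k with P_k ∩ Metric.closedBall (c i) (r i) = {p_{2·f(i)+1}, p_{(2·f(i)+2) mod 2k}} for all i. In particular, the optimal k-center problem for P_k has exactly two optimal solutions. -/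
/-!
Two vertices in a common disk of radius at most `sin (π / 2k)` are at most the side length
`2 sin (π / 2k)` apart, so they coincide or are adjacent. Hence a disk holds at most two vertices,
and as `k` disks cover `2k` vertices, each holds exactly two adjacent ones and no vertex lies in
two disks. Whether a vertex shares its disk with its successor then alternates around the
polygon, so the disks pair the vertices either as `{2m, 2m + 1}` or as `{2m + 1, 2m + 2}`.
-/

open Metric Real

noncomputable section

abbrev E : Type := EuclideanSpace ℝ (Fin 2)

/-- The `j`-th vertex of the regular `2k`-gon inscribed in the unit circle. -/
noncomputable def gonPt (k j : ℕ) : E := !₂[Real.cos (j * π / k), Real.sin (j * π / k)]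

/-- The vertex set of the regular `2k`-gon inscribed in the unit circle. -/
def Pgon (k : ℕ) : Set E := {x | ∃ j < 2 * k, x = gonPt k j}

theorem dist_cos_sin (A B : ℝ) :
    dist (!₂[cos A, sin A] : E) !₂[cos B, sin B] = 2 * |sin ((A - B) / 2)| := by
  have key : (cos A - cos B) ^ 2 + (sin A - sin B) ^ 2 = (2 * |sin ((A - B) / 2)|) ^ 2 := by
    obtain ⟨u, v, rfl, rfl⟩ : ∃ u v, A = u + v ∧ B = u - v :=
      ⟨(A + B) / 2, (A - B) / 2, by ring, by ring⟩
    rw [show (u + v - (u - v)) / 2 = v by ring, cos_add, cos_sub, sin_add, sin_sub, mul_pow, sq_abs]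
    linear_combination 4 * sin v ^ 2 * sin_sq_add_cos_sq u
  rw [EuclideanSpace.dist_eq, Fin.sum_univ_two]
  simp only [Matrix.cons_val_zero, Matrix.cons_val_one, Real.dist_eq, sq_abs]
  rw [key, sqrt_sq (by positivity)]

theorem dist_gonPt (k a b : ℕ) :
    dist (gonPt k a) (gonPt k b) = 2 * |sin (((a : ℝ) - b) * π / (2 * k))| := by
  rw [gonPt, gonPt, dist_cos_sin]
  ring_nf

theorem sin_lt_sin_of_lt_of_lt_pi_sub {t x : ℝ} (ht : -(π / 2) ≤ t) (htx : t < x)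
    (hx : x < π - t) : sin t < sin x := by
  rcases le_or_gt x (π / 2) with h | h
  · exact sin_lt_sin_of_lt_of_le_pi_div_two ht h htx
  · rw [← sin_pi_sub x]
    exact sin_lt_sin_of_lt_of_le_pi_div_two ht (by linarith) (by linarith)

theorem two_sin_lt_dist_gonPt {k a b : ℕ} (hab : b + 2 ≤ a) (ha : a + 2 ≤ 2 * k + b) :
    2 * sin (π / (2 * k)) < dist (gonPt k a) (gonPt k b) := by
  have hk : (4 : ℝ) ≤ 2 * k := by norm_cast; omega
  have hab' : (b : ℝ) + 2 ≤ a := by exact_mod_cast hab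
  have ha' : (a : ℝ) + 2 ≤ 2 * k + b := by exact_mod_cast ha
  set t := π / (2 * k) with ht
  have ht0 : 0 < t := by positivity
  have hπ : 2 * k * t = π := by rw [ht]; field_simp [(show (0 : ℝ) < k by linarith).ne']
  have harg : ((a : ℝ) - b) * π / (2 * k) = (a - b) * t := by rw [ht]; ring
  have hlow : 2 * t ≤ (a - b) * t := by nlinarith
  have hupp : (a - b) * t ≤ π - 2 * t := by nlinarith
  rw [dist_gonPt, harg, abs_of_nonneg (sin_nonneg_of_nonneg_of_le_pi (by linarith) (by linarith))]
  have := sin_lt_sin_of_lt_of_lt_pi_sub (t := t) (x := (a - b) * t) (by linarith [pi_pos])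
    (by linarith) (by linarith)
  linarith

def CycleAdj (n a b : ℕ) : Prop := (a + 1) % n = b ∨ (b + 1) % n = a

theorem add_one_mod_eq_iff {n a b : ℕ} (ha : a < n) (hb : b < n) :
    (a + 1) % n = b ↔ a + 1 = b ∨ a + 1 = n ∧ b = 0 := by
  rcases Nat.lt_or_ge (a + 1) n with h | h
  · rw [Nat.mod_eq_of_lt h]; omega
  · rw [show a + 1 = n by omega, Nat.mod_self]; omega

theorem cycleAdj_iff {n a b : ℕ} (ha : a < n) (hb : b < n) :
    CycleAdj n a b ↔ a + 1 = b ∨ b + 1 = a ∨ a + 1 = n ∧ b = 0 ∨ b + 1 = n ∧ a = 0 := by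
  rw [CycleAdj, add_one_mod_eq_iff ha hb, add_one_mod_eq_iff hb ha]
  tauto

theorem cycleAdj_of_dist_gonPt_le {k a b : ℕ} (ha : a < 2 * k) (hb : b < 2 * k) (hab : a ≠ b)
    (hd : dist (gonPt k a) (gonPt k b) ≤ 2 * sin (π / (2 * k))) : CycleAdj (2 * k) a b := by
  by_contra hn
  rw [cycleAdj_iff ha hb] at hn
  rcases lt_or_gt_of_ne hab with h | h
  · have := two_sin_lt_dist_gonPt (k := k) (a := b) (b := a) (by omega) (by omega)
    rw [dist_comm] at this
    linarith
  · have := two_sin_lt_dist_gonPt (k := k) (a := a) (b := b) (by omega) (by omega)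
    linarith

theorem card_eq_and_pairwiseDisjoint_of_cover {ι α : Type*} [Fintype ι] [DecidableEq α]
    {s : Finset α} {V : ι → Finset α} {n : ℕ} (hs : n * Fintype.card ι ≤ s.card)
    (hV : ∀ i, (V i).card ≤ n) (hcov : ∀ a ∈ s, ∃ i, a ∈ V i) :
    (∀ i, (V i).card = n) ∧ Pairwise (Function.onFun Disjoint V) := by
  classical
  choose g hg using fun a : s ↦ hcov a a.2
  set F : ι → Finset α := fun i ↦
    (Finset.univ.filter (g · = i)).map (Function.Embedding.subtype _)
  have hFV : ∀ i, F i ⊆ V i := by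
    intro i a ha
    simp only [F, Finset.mem_map, Finset.mem_filter, Finset.mem_univ, true_and,
      Function.Embedding.coe_subtype] at ha
    obtain ⟨a, rfl, rfl⟩ := ha
    exact hg a
  have hsum : ∑ i, (F i).card = ∑ _i : ι, n := by
    refine le_antisymm (Finset.sum_le_sum fun i _ ↦ (Finset.card_le_card (hFV i)).trans (hV i)) ?_
    simp only [F, Finset.card_map, Finset.sum_const, Finset.card_univ, smul_eq_mul]
    calc Fintype.card ι * n = n * Fintype.card ι := mul_comm _ _
      _ ≤ s.card := hs
      _ = _ := by
        rw [← Fintype.card_coe s, ← Finset.card_univ]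
        exact Finset.card_eq_sum_card_fiberwise fun _ _ ↦ Finset.mem_univ _
  have hFn : ∀ i, (F i).card = n := fun i ↦
    (Finset.sum_eq_sum_iff_of_le fun i _ ↦ (Finset.card_le_card (hFV i)).trans (hV i)).1 hsum i
      (Finset.mem_univ i)
  have hVF : ∀ i, V i = F i := fun i ↦
    (Finset.eq_of_subset_of_card_le (hFV i) ((hV i).trans (hFn i).ge)).symm
  refine ⟨fun i ↦ hVF i ▸ hFn i, fun i j hij ↦ Finset.disjoint_left.2 fun a hi hj ↦ ?_⟩
  refine hij ?_
  rw [hVF] at hi hj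
  simp only [F, Finset.mem_map, Finset.mem_filter, Finset.mem_univ, true_and,
    Function.Embedding.coe_subtype] at hi hj
  obtain ⟨a, rfl, rfl⟩ := hi
  obtain ⟨b, hbj, hba⟩ := hj
  rwa [Subtype.ext hba] at hbj

structure IsCycleCliqueCover (k : ℕ) (V : Fin k → Finset ℕ) : Prop where
  subset : ∀ i, V i ⊆ Finset.range (2 * k)
  pairwise : ∀ i, (V i : Set ℕ).Pairwise (CycleAdj (2 * k))
  cover : ∀ j < 2 * k, ∃ i, j ∈ V i

def SharesCellWithSucc {k : ℕ} (V : Fin k → Finset ℕ) (j : ℕ) : Prop :=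
  ∃ i, j ∈ V i ∧ (j + 1) % (2 * k) ∈ V i

namespace IsCycleCliqueCover

variable {k : ℕ} {V : Fin k → Finset ℕ}

theorem lt_of_mem (hV : IsCycleCliqueCover k V) {i : Fin k} {a : ℕ} (ha : a ∈ V i) :
    a < 2 * k :=
  Finset.mem_range.1 (hV.subset i ha)

theorem card_le_two (hV : IsCycleCliqueCover k V) (i : Fin k) : (V i).card ≤ 2 := by
  by_contra! h
  obtain ⟨a, ha, b, hb, c, hc, hab, hac, hbc⟩ := Finset.two_lt_card.1 h
  have h₁ := (cycleAdj_iff (hV.lt_of_mem ha) (hV.lt_of_mem hb)).1 (hV.pairwise i ha hb hab)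
  have h₂ := (cycleAdj_iff (hV.lt_of_mem ha) (hV.lt_of_mem hc)).1 (hV.pairwise i ha hc hac)
  have h₃ := (cycleAdj_iff (hV.lt_of_mem hb) (hV.lt_of_mem hc)).1 (hV.pairwise i hb hc hbc)
  omega

theorem card_eq_two (hV : IsCycleCliqueCover k V) (i : Fin k) : (V i).card = 2 :=
  (card_eq_and_pairwiseDisjoint_of_cover (s := Finset.range (2 * k)) (by simp)
    hV.card_le_two fun j hj ↦ hV.cover j (Finset.mem_range.1 hj)).1 i

theorem eq_of_mem_of_mem (hV : IsCycleCliqueCover k V) {a : ℕ} {i j : Fin k}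
    (hi : a ∈ V i) (hj : a ∈ V j) : i = j :=
  (card_eq_and_pairwiseDisjoint_of_cover (s := Finset.range (2 * k)) (by simp)
    hV.card_le_two fun j hj ↦ hV.cover j (Finset.mem_range.1 hj)).2.eq
    (Finset.not_disjoint_iff.2 ⟨a, hi, hj⟩)

theorem sharesCellWithSucc_succ_iff (hk : 2 ≤ k) (hV : IsCycleCliqueCover k V) {j : ℕ}
    (hj : j + 1 < 2 * k) : SharesCellWithSucc V (j + 1) ↔ ¬SharesCellWithSucc V j := by
  constructor
  · rintro ⟨i, hi₁, hi₂⟩ ⟨i', hi'₀, hi'₁⟩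
    rw [Nat.mod_eq_of_lt hj] at hi'₁
    obtain rfl := hV.eq_of_mem_of_mem hi₁ hi'₁
    generalize hb : (j + 1 + 1) % (2 * k) = b at hi₂
    rw [add_one_mod_eq_iff hj (hV.lt_of_mem hi₂)] at hb
    have hjb := hV.pairwise i hi'₀ hi₂ (by omega)
    rw [cycleAdj_iff (by omega) (hV.lt_of_mem hi₂)] at hjb
    omega
  · intro hn
    obtain ⟨i, hi⟩ := hV.cover (j + 1) hj
    obtain ⟨b, hb, hbj⟩ := Finset.exists_mem_ne (by rw [hV.card_eq_two i]; norm_num) (j + 1)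
    rcases hV.pairwise i hi hb hbj.symm with h | h
    · exact ⟨i, hi, h ▸ hb⟩
    · obtain rfl : b = j := by
        rw [add_one_mod_eq_iff (hV.lt_of_mem hb) hj] at h
        omega
      exact absurd ⟨i, hb, by rwa [Nat.mod_eq_of_lt hj]⟩ hn

theorem sharesCellWithSucc_iff_even (hk : 2 ≤ k) (hV : IsCycleCliqueCover k V) :
    ∀ {j : ℕ}, j < 2 * k → (SharesCellWithSucc V j ↔ (Even j ↔ SharesCellWithSucc V 0))
  | 0, _ => by simp
  | j + 1, hj => by
    rw [hV.sharesCellWithSucc_succ_iff hk hj, hV.sharesCellWithSucc_iff_even hk (by omega),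
      Nat.even_add_one]
    tauto

theorem exists_perm_eq_pair_of_sharesCellWithSucc (hV : IsCycleCliqueCover k V) (q : ℕ)
    (hq : ∀ m < k, SharesCellWithSucc V (2 * m + q)) :
    ∃ f : Equiv.Perm (Fin k), ∀ i, V i = {2 * f i + q, (2 * f i + q + 1) % (2 * k)} := by
  choose h hh using fun m : Fin k ↦ hq m m.2
  have hinj : h.Injective := by
    intro m m' hmm'
    have hm := (hh m).1
    have hm' := (hh m').1
    rw [← hmm'] at hm'
    by_contra hne
    have hadj := hV.pairwise _ hm hm' (by simpa [Fin.ext_iff] using hne)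
    rw [cycleAdj_iff (hV.lt_of_mem hm) (hV.lt_of_mem hm')] at hadj
    omega
  set e := Equiv.ofBijective h (Finite.injective_iff_bijective.1 hinj)
  refine ⟨e.symm, fun i ↦ ?_⟩
  obtain ⟨m, rfl⟩ := e.surjective i
  rw [e.symm_apply_apply]
  obtain ⟨ha, hb⟩ := hh m
  refine (Finset.eq_of_subset_of_card_le (Finset.insert_subset ha
    (Finset.singleton_subset_iff.2 hb)) ?_).symm
  generalize hb' : (2 * (m : ℕ) + q + 1) % (2 * k) = b at hb
  rw [add_one_mod_eq_iff (hV.lt_of_mem ha) (hV.lt_of_mem hb)] at hb'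
  rw [hV.card_eq_two, Finset.card_pair (by omega)]

theorem exists_perm_eq_pairs (hk : 2 ≤ k) (hV : IsCycleCliqueCover k V) :
    (∃ f : Equiv.Perm (Fin k), ∀ i, V i = {2 * (f i : ℕ), 2 * (f i : ℕ) + 1}) ∨
      ∃ f : Equiv.Perm (Fin k), ∀ i,
        V i = {2 * (f i : ℕ) + 1, (2 * (f i : ℕ) + 2) % (2 * k)} := by
  by_cases h₀ : SharesCellWithSucc V 0
  · left
    obtain ⟨f, hf⟩ := hV.exists_perm_eq_pair_of_sharesCellWithSucc 0 fun m hm ↦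
      (hV.sharesCellWithSucc_iff_even hk (by omega)).2 (iff_of_true (even_two_mul m) h₀)
    exact ⟨f, fun i ↦ by rw [hf, add_zero, Nat.mod_eq_of_lt (by omega)]⟩
  · right
    exact hV.exists_perm_eq_pair_of_sharesCellWithSucc 1 fun m hm ↦
      (hV.sharesCellWithSucc_iff_even hk (by omega)).2 
        (iff_of_false (Nat.not_even_two_mul_add_one m) h₀)

end IsCycleCliqueCover

theorem gon_optimal_cover_is_one_of_two_matchings
    (k : ℕ) (hk : 2 ≤ k) (c : Fin k → E) (r : Fin k → ℝ)
    (hr : ∀ i, r i ≤ Real.sin (π / (2 * k)))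
    (hcov : Pgon k ⊆ ⋃ i, Metric.closedBall (c i) (r i)) :
    (∃ f : Equiv.Perm (Fin k), ∀ i,
        Pgon k ∩ Metric.closedBall (c i) (r i)
          = {gonPt k (2 * ((f i : ℕ))), gonPt k (2 * ((f i : ℕ)) + 1)}) ∨
    (∃ f : Equiv.Perm (Fin k), ∀ i,
        Pgon k ∩ Metric.closedBall (c i) (r i)
          = {gonPt k (2 * ((f i : ℕ)) + 1), gonPt k ((2 * ((f i : ℕ)) + 2) % (2 * k))}) := by
  classical
  set V : Fin k → Finset ℕ := fun i ↦
    (Finset.range (2 * k)).filter (gonPt k · ∈ closedBall (c i) (r i))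
  have hV : IsCycleCliqueCover k V := by
    refine ⟨fun i ↦ Finset.filter_subset _ _, fun i a ha b hb hab ↦ ?_, fun j hj ↦ ?_⟩
    · simp only [V, Finset.coe_filter, Finset.mem_range, mem_closedBall,
        Set.mem_ofPred_eq] at ha hb
      refine cycleAdj_of_dist_gonPt_le ha.1 hb.1 hab ?_
      linarith [dist_triangle_right (gonPt k a) (gonPt k b) (c i), hr i]
    · obtain ⟨i, hi⟩ := Set.mem_iUnion.1 (hcov ⟨j, hj, rfl⟩)
      exact ⟨i, Finset.mem_filter.2 ⟨Finset.mem_range.2 hj, hi⟩⟩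
  have hcell : ∀ i, Pgon k ∩ closedBall (c i) (r i) = gonPt k '' V i := by
    intro i
    ext x
    simp only [Pgon, V, Set.mem_inter_iff, Set.mem_ofPred_eq, Finset.coe_filter, Finset.mem_range,
      Set.mem_image]
    constructor
    · rintro ⟨⟨j, hj, rfl⟩, hx⟩
      exact ⟨j, ⟨hj, hx⟩, rfl⟩
    · rintro ⟨j, ⟨hj, hx⟩, rfl⟩
      exact ⟨⟨j, hj, rfl⟩, hx⟩
  rcases hV.exists_perm_eq_pairs hk with ⟨f, hf⟩ | ⟨f, hf⟩
  · exact Or.inl ⟨f, fun i ↦ by rw [hcell, hf, Finset.coe_pair, Set.image_pair]⟩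
  · exact Or.inr ⟨f, fun i ↦ by rw [hcell, hf, Finset.coe_pair, Set.image_pair]⟩

end
end

section
/- Work in E∞ = ℝ × ℝ with the sup (L∞) metric, so closed balls are axis-aligned squares. Let P ⊆ E∞ be a finite point set, let k ≥ 2, and let C ≥ 0. Let R = (c⁰, r⁰) and B = (c¹, r¹) be two configurations of k squares, each covering P, with r⁰ i ≤ C and r¹ i ≤ C for all i. Then there exists a continuous morph (γ, ρ) on [0,1] from R to B covering P such that ρ i t ≤ 2C for all i ∈ Fin k and all t ∈ [0,1]. (This is the upper-bound half of the theorem that the topological stability ratio of the minmax rectilinear k-center problem equals 2.) -/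
/-!
Pair red squares with blue squares that meet, taking a maximal such pairing (realised by a
permutation `σ` on a set `M` of indices): then every point of `P` lies in a paired square. Around a
common point `q` of a pair, the square of radius `2C` contains both squares of the pair. The morph
runs in three stages: each paired red square grows into its square around `q`; the unpaired red
squares travel to the unpaired blue squares while the grown squares alone cover `P`; the grown
squares shrink onto their blue squares. Linear interpolation between two squares keeps covering
whatever both of them cover, by convexity of the norm.
-/

open Metric Set Real Pointwise

noncomputable section

noncomputable def pt (x y : ℝ) : E := WithLp.toLp 2 ![x, y]

/-- A continuous morph on `[0,1]` from configuration `(c0, r0)` to configuration `(c1, r1)`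
of `k` balls, covering the point set `P` at all times. -/
def IsMorph {X : Type*} [PseudoMetricSpace X] (k : ℕ) (P : Set X)
    (c0 c1 : Fin k → X) (r0 r1 : Fin k → ℝ)
    (γ : Fin k → ℝ → X) (ρ : Fin k → ℝ → ℝ) : Prop :=
  (∀ i, ContinuousOn (γ i) (Set.Icc 0 1)) ∧
  (∀ i, ContinuousOn (ρ i) (Set.Icc 0 1)) ∧
  (∀ i, ∀ t ∈ Set.Icc (0:ℝ) 1, 0 ≤ ρ i t) ∧
  (∀ i, γ i 0 = c0 i) ∧
  (∀ i, ρ i 0 = r0 i) ∧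
  (∃ σ : Equiv.Perm (Fin k), (∀ i, γ i 1 = c1 (σ i)) ∧ (∀ i, ρ i 1 = r1 (σ i))) ∧
  (∀ t ∈ Set.Icc (0:ℝ) 1, P ⊆ ⋃ i, Metric.closedBall (γ i t) (ρ i t))

open AffineMap

theorem exists_perm_finset_subset_biUnion_union {ι α : Type*} [Fintype ι] [DecidableEq ι]
    {A B : ι → Set α} {P : Set α}
    (hA : P ⊆ ⋃ i, A i) (hB : P ⊆ ⋃ i, B i) :
    ∃ (σ : Equiv.Perm ι) (M : Finset ι), (∀ i ∈ M, (A i ∩ B (σ i)).Nonempty) ∧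
      P ⊆ ⋃ i ∈ M, A i ∪ B (σ i) := by
  let IsPairing : Equiv.Perm ι × Finset ι → Prop := fun p => ∀ i ∈ p.2, (A i ∩ B (p.1 i)).Nonempty
  classical
  obtain ⟨⟨σ, M⟩, hσM, hmax⟩ := Finset.exists_max_image ({p | IsPairing p} : Finset _)
    (fun p => p.2.card) ⟨(1, ∅), by simp [IsPairing]⟩
  replace hσM : IsPairing (σ, M) := (Finset.mem_filter.1 hσM).2
  refine ⟨σ, M, hσM, fun x hx => ?_⟩
  by_contra hxM
  simp only [mem_iUnion, mem_union, not_exists, not_or] at hxM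
  obtain ⟨i, hi⟩ := mem_iUnion.1 (hA hx)
  obtain ⟨j, hj⟩ := mem_iUnion.1 (hB hx)
  have hiM : i ∉ M := fun h => (hxM i h).1 hi
  have hjM : σ.symm j ∉ M := fun h => (hxM _ h).2 (by simpa using hj)
  -- A point of `A i ∩ B j` outside every pair lets a maximal pairing also pair `i` with `j`.
  have hnew : IsPairing (Equiv.swap (σ i) j * σ, insert i M) := by
    intro m hm
    rcases Finset.mem_insert.1 hm with rfl | hm
    · exact ⟨x, hi, by simpa using hj⟩
    · have h₁ : σ m ≠ σ i := σ.injective.ne (ne_of_mem_of_not_mem hm hiM)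
      have h₂ : σ m ≠ j := fun h => hjM (by simpa [← h] using hm)
      simpa [Equiv.swap_apply_of_ne_of_ne h₁ h₂] using hσM m hm
  have := hmax _ (Finset.mem_filter.2 ⟨Finset.mem_univ _, hnew⟩)
  simp [Finset.card_insert_of_notMem hiM] at this

theorem union_closedBall_subset_closedBall_two_mul {X : Type*} [PseudoMetricSpace X] {a b q : X}
    {r s C : ℝ} (hq : q ∈ closedBall a r ∩ closedBall b s) (hr : r ≤ C) (hs : s ≤ C) :
    closedBall a r ∪ closedBall b s ⊆ closedBall q (2 * C) :=
  union_subset (closedBall_subset_closedBall' (by linarith [mem_closedBall'.1 hq.1]))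
    (closedBall_subset_closedBall' (by linarith [mem_closedBall'.1 hq.2]))

section ThreeStagePath

variable {V : Type*} [AddCommGroup V] [Module ℝ V]

def stageParam (j : ℕ) (t : ℝ) : ℝ := max 0 (min 1 (3 * t - j))

@[fun_prop]
theorem continuous_stageParam (j : ℕ) : Continuous (stageParam j) := by
  unfold stageParam; fun_prop

theorem stageParam_mem_Icc (j : ℕ) (t : ℝ) : stageParam j t ∈ Icc 0 1 :=
  ⟨le_max_left _ _, max_le zero_le_one (min_le_left _ _)⟩

theorem stageParam_of_le {j : ℕ} {t : ℝ} (h : 3 * t ≤ j) : stageParam j t = 0 :=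
  max_eq_left ((min_le_right _ _).trans (by linarith))

theorem stageParam_of_ge {j : ℕ} {t : ℝ} (h : j + 1 ≤ 3 * t) : stageParam j t = 1 := by
  rw [stageParam, min_eq_left (by linarith), max_eq_right zero_le_one]

/-- The piecewise affine path through `w₀, w₁, w₂, w₃` at the times `0, 1/3, 2/3, 1`. -/
def threeStagePath (w₀ w₁ w₂ w₃ : V) (t : ℝ) : V :=
  w₀ + stageParam 0 t • (w₁ - w₀) + stageParam 1 t • (w₂ - w₁) + stageParam 2 t • (w₃ - w₂)

variable (w₀ w₁ w₂ w₃ : V) {t : ℝ}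

theorem threeStagePath_of_le_one (h : 3 * t ≤ 1) :
    threeStagePath w₀ w₁ w₂ w₃ t = lineMap w₀ w₁ (stageParam 0 t) := by
  rw [threeStagePath, stageParam_of_le (j := 1) (by simpa using h),
    stageParam_of_le (j := 2) (by norm_num; linarith), lineMap_apply_module']
  simp only [zero_smul, add_zero]; abel

theorem threeStagePath_of_one_le_of_le_two (h₁ : 1 ≤ 3 * t) (h₂ : 3 * t ≤ 2) :
    threeStagePath w₀ w₁ w₂ w₃ t = lineMap w₁ w₂ (stageParam 1 t) := by
  rw [threeStagePath, stageParam_of_ge (j := 0) (by simpa using h₁),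
    stageParam_of_le (j := 2) (by simpa using h₂), lineMap_apply_module']
  simp only [one_smul, zero_smul, add_zero]; abel

theorem threeStagePath_of_two_le (h : 2 ≤ 3 * t) :
    threeStagePath w₀ w₁ w₂ w₃ t = lineMap w₂ w₃ (stageParam 2 t) := by
  rw [threeStagePath, stageParam_of_ge (j := 0) (by norm_num; linarith),
    stageParam_of_ge (j := 1) (by norm_num; linarith), lineMap_apply_module']
  simp only [one_smul]; abel

@[simp]
theorem threeStagePath_zero : threeStagePath w₀ w₁ w₂ w₃ 0 = w₀ := by
  rw [threeStagePath_of_le_one _ _ _ _ (by norm_num), stageParam_of_le (by norm_num),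
    lineMap_apply_zero]

@[simp]
theorem threeStagePath_one : threeStagePath w₀ w₁ w₂ w₃ 1 = w₃ := by
  rw [threeStagePath_of_two_le _ _ _ _ (by norm_num), stageParam_of_ge (by norm_num),
    lineMap_apply_one]

variable {w₀ w₁ w₂ w₃}

theorem Convex.threeStagePath_mem {s : Set V} (hs : Convex ℝ s) (h₀ : w₀ ∈ s) (h₁ : w₁ ∈ s)
    (h₂ : w₂ ∈ s) (h₃ : w₃ ∈ s) (t : ℝ) : threeStagePath w₀ w₁ w₂ w₃ t ∈ s := by
  rcases le_total (3 * t) 1 with ht | ht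
  · rw [threeStagePath_of_le_one _ _ _ _ ht]
    exact hs.lineMap_mem h₀ h₁ (stageParam_mem_Icc _ _)
  rcases le_total (3 * t) 2 with ht' | ht'
  · rw [threeStagePath_of_one_le_of_le_two _ _ _ _ ht ht']
    exact hs.lineMap_mem h₁ h₂ (stageParam_mem_Icc _ _)
  · rw [threeStagePath_of_two_le _ _ _ _ ht']
    exact hs.lineMap_mem h₂ h₃ (stageParam_mem_Icc _ _)

end ThreeStagePath

section Morph

variable {V : Type*} [SeminormedAddCommGroup V] [NormedSpace ℝ V]

theorem closedBall_inter_closedBall_subset_closedBall_lineMap {x y : V} {r s t : ℝ}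
    (ht : t ∈ Icc 0 1) :
    closedBall x r ∩ closedBall y s ⊆ closedBall (lineMap x y t) (lineMap r s t) := by
  rintro z ⟨hx, hy⟩
  rw [mem_closedBall'] at hx hy ⊢
  have := (convexOn_dist z convex_univ).2 (mem_univ x) (mem_univ y) (sub_nonneg.2 ht.2) ht.1
    (sub_add_cancel 1 t)
  rw [← lineMap_apply_module] at this
  rw [lineMap_apply_module r]
  refine this.trans ?_
  simp only [smul_eq_mul]
  gcongr
  exacts [sub_nonneg.2 ht.2, ht.1]

theorem subset_iUnion_closedBall_threeStagePath {ι : Type*} {P : Set V}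
    {c₀ c₁ c₂ c₃ : ι → V} {r₀ r₁ r₂ r₃ : ι → ℝ}
    (h₀₁ : P ⊆ ⋃ i, closedBall (c₀ i) (r₀ i) ∩ closedBall (c₁ i) (r₁ i))
    (h₁₂ : P ⊆ ⋃ i, closedBall (c₁ i) (r₁ i) ∩ closedBall (c₂ i) (r₂ i))
    (h₂₃ : P ⊆ ⋃ i, closedBall (c₂ i) (r₂ i) ∩ closedBall (c₃ i) (r₃ i)) (t : ℝ) :
    P ⊆ ⋃ i, closedBall (threeStagePath (c₀ i) (c₁ i) (c₂ i) (c₃ i) t)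
      (threeStagePath (r₀ i) (r₁ i) (r₂ i) (r₃ i) t) := by
  have stage {a b : ι → V} {ra rb : ι → ℝ}
      (h : P ⊆ ⋃ i, closedBall (a i) (ra i) ∩ closedBall (b i) (rb i)) (j : ℕ) :
      P ⊆ ⋃ i, closedBall (lineMap (a i) (b i) (stageParam j t))
        (lineMap (ra i) (rb i) (stageParam j t)) :=
    h.trans <| iUnion_mono fun _ =>
      closedBall_inter_closedBall_subset_closedBall_lineMap (stageParam_mem_Icc j t)
  rcases le_total (3 * t) 1 with ht | ht
  · simpa only [threeStagePath_of_le_one _ _ _ _ ht] using stage h₀₁ 0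
  rcases le_total (3 * t) 2 with ht' | ht'
  · simpa only [threeStagePath_of_one_le_of_le_two _ _ _ _ ht ht'] using stage h₁₂ 1
  · simpa only [threeStagePath_of_two_le _ _ _ _ ht'] using stage h₂₃ 2

theorem isMorph_threeStagePath {k : ℕ} {P : Set V} (σ : Equiv.Perm (Fin k))
    {c₀ c₁ c₂ c₃ : Fin k → V} {r₀ r₁ r₂ r₃ : Fin k → ℝ}
    (h₀ : P ⊆ ⋃ i, closedBall (c₀ i) (r₀ i))
    (h₀₁ : ∀ i, closedBall (c₀ i) (r₀ i) ⊆ closedBall (c₁ i) (r₁ i))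
    (h₁₂ : P ⊆ ⋃ i, closedBall (c₁ i) (r₁ i) ∩ closedBall (c₂ i) (r₂ i))
    (h₃ : P ⊆ ⋃ i, closedBall (c₃ i) (r₃ i))
    (h₃₂ : ∀ i, closedBall (c₃ (σ i)) (r₃ (σ i)) ⊆ closedBall (c₂ i) (r₂ i))
    (hr₀ : ∀ i, 0 ≤ r₀ i) (hr₁ : ∀ i, 0 ≤ r₁ i) (hr₂ : ∀ i, 0 ≤ r₂ i) (hr₃ : ∀ i, 0 ≤ r₃ i) :
    IsMorph k P c₀ c₃ r₀ r₃ (fun i => threeStagePath (c₀ i) (c₁ i) (c₂ i) (c₃ (σ i)))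
      (fun i => threeStagePath (r₀ i) (r₁ i) (r₂ i) (r₃ (σ i))) := by
  rw [← σ.surjective.iUnion_comp] at h₃
  have hcover := subset_iUnion_closedBall_threeStagePath
    (h₀.trans (iUnion_mono fun i => subset_inter subset_rfl (h₀₁ i))) h₁₂
    (h₃.trans (iUnion_mono fun i => subset_inter (h₃₂ i) subset_rfl))
  refine ⟨fun i => ?_, fun i => ?_, fun i t _ => ?_, fun i => ?_, fun i => ?_,
    ⟨σ, fun i => ?_, fun i => ?_⟩, fun t _ => hcover t⟩
  · exact Continuous.continuousOn (by unfold threeStagePath; fun_prop)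
  · exact Continuous.continuousOn (by unfold threeStagePath; fun_prop)
  · exact (convex_Ici (0 : ℝ)).threeStagePath_mem (hr₀ i) (hr₁ i) (hr₂ i) (hr₃ _) t
  all_goals simp

end Morph

theorem minmax_rectilinear_morph_factor_two_general
    (k : ℕ) (P : Set (ℝ × ℝ)) (C : ℝ)
    (c0 c1 : Fin k → ℝ × ℝ) (r0 r1 : Fin k → ℝ)
    (hr0 : ∀ i, 0 ≤ r0 i) (hr1 : ∀ i, 0 ≤ r1 i)
    (h0 : P ⊆ ⋃ i, Metric.closedBall (c0 i) (r0 i))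
    (h1 : P ⊆ ⋃ i, Metric.closedBall (c1 i) (r1 i))
    (hb0 : ∀ i, r0 i ≤ C) (hb1 : ∀ i, r1 i ≤ C) :
    ∃ γ ρ, IsMorph k P c0 c1 r0 r1 γ ρ ∧
      ∀ i, ∀ t ∈ Set.Icc (0:ℝ) 1, ρ i t ≤ 2 * C := by
  obtain ⟨σ, M, hM, hPM⟩ := exists_perm_finset_subset_biUnion_union h0 h1
  choose! q hq using hM
  have hpivot (i) (hi : i ∈ M) :=
    union_closedBall_subset_closedBall_two_mul (hq i hi) (hb0 i) (hb1 (σ i))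
  set c₁ := M.piecewise q c0
  set c₂ := M.piecewise q (c1 ∘ σ)
  set r₁ := M.piecewise (fun _ => 2 * C) r0
  set r₂ := M.piecewise (fun _ => 2 * C) (r1 ∘ σ)
  have hnest (i) : closedBall (c0 i) (r0 i) ⊆ closedBall (c₁ i) (r₁ i) ∧
      closedBall (c1 (σ i)) (r1 (σ i)) ⊆ closedBall (c₂ i) (r₂ i) := by
    by_cases hi : i ∈ M
    · simpa [c₁, c₂, r₁, r₂, hi, union_subset_iff] using hpivot i hi
    · simp [c₁, c₂, r₁, r₂, hi]
  have hmiddle : P ⊆ ⋃ i, closedBall (c₁ i) (r₁ i) ∩ closedBall (c₂ i) (r₂ i) :=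
    hPM.trans <| iUnion₂_subset fun i hi => subset_iUnion_of_subset i <| by
      simpa [c₁, c₂, r₁, r₂, hi] using hpivot i hi
  have hR₀ (i) : r0 i ∈ Icc 0 (2 * C) := ⟨hr0 i, by linarith [hr0 i, hb0 i]⟩
  have hR₃ (i) : r1 i ∈ Icc 0 (2 * C) := ⟨hr1 i, by linarith [hr1 i, hb1 i]⟩
  have h2C (i) : 2 * C ∈ Icc 0 (2 * C) := ⟨(hR₀ i).1.trans (hR₀ i).2, le_rfl⟩
  have hR₁ (i) : r₁ i ∈ Icc 0 (2 * C) := M.piecewise_cases _ _ (· ∈ _) (h2C i) (hR₀ i)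
  have hR₂ (i) : r₂ i ∈ Icc 0 (2 * C) := M.piecewise_cases _ _ (· ∈ _) (h2C i) (hR₃ (σ i))
  exact ⟨_, _, isMorph_threeStagePath σ h0 (fun i => (hnest i).1) hmiddle h1 (fun i => (hnest i).2)
      hr0 (fun i => (hR₁ i).1) (fun i => (hR₂ i).1) hr1,
    fun i t _ => ((convex_Icc _ _).threeStagePath_mem (hR₀ i) (hR₁ i) (hR₂ i) (hR₃ _) t).2⟩

theorem minmax_rectilinear_morph_factor_two
    (k : ℕ) (hk : 2 ≤ k) (P : Set (ℝ × ℝ)) (hP : P.Finite) (C : ℝ) (hC : 0 ≤ C)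
    (c0 c1 : Fin k → ℝ × ℝ) (r0 r1 : Fin k → ℝ)
    (hr0 : ∀ i, 0 ≤ r0 i) (hr1 : ∀ i, 0 ≤ r1 i)
    (h0 : P ⊆ ⋃ i, Metric.closedBall (c0 i) (r0 i))
    (h1 : P ⊆ ⋃ i, Metric.closedBall (c1 i) (r1 i))
    (hb0 : ∀ i, r0 i ≤ C) (hb1 : ∀ i, r1 i ≤ C) :
    ∃ γ ρ, IsMorph k P c0 c1 r0 r1 γ ρ ∧
      ∀ i, ∀ t ∈ Set.Icc (0:ℝ) 1, ρ i t ≤ 2 * C :=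
  minmax_rectilinear_morph_factor_two_general k P C c0 c1 r0 r1 hr0 hr1 h0 h1 hb0 hb1
end
end
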